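/- arXiv:2305.09168 — 11 statements merged into one kernel-verified Lean document; each statement's English description precedes it below -/
import Mathlib

section
/- Let C ≥ 1 be an integer and let (λ_k)_{k≥0} be a sequence of nonnegative real numbers such that the series S := ∑_{n=0}^∞ ∏_{k=0}^{n} (λ_k / min(k+1, C)) converges. Define P_i := (∏_{k=0}^{i-1} λ_k / min(k+1, C))/(1+S) for i ≥ 0 (with the empty product for i = 0 equal to 1). Then ∑_{i=0}^∞ λ_i P_i < C. -/
open Finset

/-- Lemma 5 (multi-server stability): with `C` servers of unit rate,
service rate `min(k+1,C)` when jumping from state `k` to `k+1`'s balance,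
if the series `S = ∑_{n≥0} ∏_{k=0}^{n} λ_k / min(k+1,C)` converges, then the
average arrival rate `∑_i λ_i P_i` is strictly less than `C`. -/
theorem multi_server_stability (C : ℕ) (hC : 1 ≤ C) (lam : ℕ → ℝ)
    (hnn : ∀ k, 0 ≤ lam k)
    (hS : Summable fun n => ∏ k ∈ Finset.range (n + 1), lam k / (min (k + 1) C : ℝ)) :
    (∑' i : ℕ, lam i *
        ((∏ k ∈ Finset.range i, lam k / (min (k + 1) C : ℝ)) /
          (1 + ∑' n : ℕ, ∏ k ∈ Finset.range (n + 1), lam k / (min (k + 1) C : ℝ)))) <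
      (C : ℝ) := by
  have hmpos : ∀ k : ℕ, (0:ℝ) < (min (k + 1) C : ℝ) := by
    intro k
    exact_mod_cast lt_min (Nat.succ_pos k) (Nat.lt_of_lt_of_le Nat.zero_lt_one hC)
  set a : ℕ → ℝ := fun n => ∏ k ∈ Finset.range (n + 1), lam k / (min (k + 1) C : ℝ) with ha_def
  have ha : ∀ n, 0 ≤ a n := fun n =>
    Finset.prod_nonneg fun k _ => div_nonneg (hnn k) (hmpos k).le
  set S : ℝ := ∑' n, a n with hS_def
  have hS0 : 0 ≤ S := tsum_nonneg ha
  have hD : (0:ℝ) < 1 + S := by linarith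
  have hCpos : (0:ℝ) < C := by exact_mod_cast Nat.lt_of_lt_of_le Nat.zero_lt_one hC
  have key : ∀ i, lam i * (∏ k ∈ Finset.range i, lam k / (min (k + 1) C : ℝ))
      = (min (i + 1) C : ℝ) * a i := by
    intro i
    have hne := (hmpos i).ne'
    rw [ha_def]
    simp only [Finset.prod_range_succ]
    field_simp
  have hbound : ∀ i, lam i * ((∏ k ∈ Finset.range i, lam k / (min (k + 1) C : ℝ)) / (1 + S))
      ≤ (C : ℝ) * a i / (1 + S) := by
    intro i
    rw [← mul_div_assoc, key]
    have hmin : (min (i + 1) C : ℝ) ≤ (C : ℝ) := by exact_mod_cast min_le_right (i+1) C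
    gcongr
    exact ha i
  have hgsum : Summable fun i => (C : ℝ) * a i / (1 + S) :=
    (hS.mul_left _).div_const _
  have hfsum : Summable fun i =>
      lam i * ((∏ k ∈ Finset.range i, lam k / (min (k + 1) C : ℝ)) / (1 + S)) := by
    apply Summable.of_nonneg_of_le _ hbound hgsum
    intro i
    exact mul_nonneg (hnn i) (div_nonneg (Finset.prod_nonneg fun k _ =>
      div_nonneg (hnn k) (hmpos k).le) hD.le)
  calc (∑' i, lam i * ((∏ k ∈ Finset.range i, lam k / (min (k + 1) C : ℝ)) / (1 + S)))
      ≤ ∑' i, (C : ℝ) * a i / (1 + S) := Summable.tsum_le_tsum hbound hfsum hgsum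
    _ = (C : ℝ) * S / (1 + S) := by
        rw [tsum_div_const, tsum_mul_left]
    _ < C := by
        rw [div_lt_iff₀ hD]
        nlinarith
end

section
/- Let C ≥ 1 and N ≥ 0 be integers. For real λ ≥ 0, let b_i(λ) := λ^i / ∏_{k=1}^{i} min(k, C) for integers i ≥ 0 (so b_0(λ) = 1). Then the function λ ↦ b_N(λ) / ∑_{i=0}^{N} b_i(λ) is nondecreasing on [0, ∞). -/
open Finset

/-- The unnormalized stationary weights of an M/M/C/N queue with arrival rate
`λ` and unit service rates. -/
noncomputable def mmcWeight (C : ℕ) (lam : ℝ) (i : ℕ) : ℝ :=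
  lam ^ i / ∏ k ∈ Finset.Icc 1 i, (min k C : ℝ)

lemma mmc_prod_pos (C : ℕ) (hC : 1 ≤ C) (i : ℕ) :
    0 < ∏ k ∈ Finset.Icc 1 i, (min k C : ℝ) := by
  apply Finset.prod_pos
  intro k hk
  simp only [Finset.mem_Icc] at hk
  have h : 0 < min k C := lt_of_lt_of_le Nat.one_pos (le_min hk.1 hC)
  exact_mod_cast h

lemma mmcWeight_nonneg (C : ℕ) (hC : 1 ≤ C) {lam : ℝ} (hl : 0 ≤ lam) (i : ℕ) :
    0 ≤ mmcWeight C lam i :=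
  div_nonneg (pow_nonneg hl i) (le_of_lt (mmc_prod_pos C hC i))

lemma mmc_sum_pos (C : ℕ) (hC : 1 ≤ C) (N : ℕ) {lam : ℝ} (hl : 0 ≤ lam) :
    0 < ∑ i ∈ Finset.range (N + 1), mmcWeight C lam i := by
  apply Finset.sum_pos'
  · intro i _; exact mmcWeight_nonneg C hC hl i
  · refine ⟨0, Finset.mem_range.mpr (Nat.succ_pos N), ?_⟩
    simp [mmcWeight]

/-- The blocking probability `b_N(λ) / ∑_{i=0}^{N} b_i(λ)` of an M/M/C/N queue
is nondecreasing in the arrival rate `λ` on `[0,∞)`. -/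
theorem blocking_prob_monotone (C : ℕ) (hC : 1 ≤ C) (N : ℕ) :
    MonotoneOn
      (fun lam => mmcWeight C lam N / ∑ i ∈ Finset.range (N + 1), mmcWeight C lam i)
      (Set.Ici (0 : ℝ)) := by
  intro a ha b hb hab
  simp only [Set.mem_Ici] at ha hb
  simp only
  rw [div_le_div_iff₀ (mmc_sum_pos C hC N ha) (mmc_sum_pos C hC N hb),
    Finset.mul_sum, Finset.mul_sum]
  apply Finset.sum_le_sum
  intro i hi
  have hiN : i ≤ N := Nat.lt_succ_iff.mp (Finset.mem_range.mp hi)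
  unfold mmcWeight
  rw [div_mul_div_comm, div_mul_div_comm]
  rw [div_le_div_iff₀ (mul_pos (mmc_prod_pos C hC N) (mmc_prod_pos C hC i))
    (mul_pos (mmc_prod_pos C hC N) (mmc_prod_pos C hC i))]
  apply mul_le_mul_of_nonneg_right ?_
    (le_of_lt (mul_pos (mmc_prod_pos C hC N) (mmc_prod_pos C hC i)))
  have h1 : a ^ (N - i) * b ^ i ≤ b ^ (N - i) * b ^ i :=
    mul_le_mul_of_nonneg_right (pow_le_pow_left₀ ha hab _) (pow_nonneg hb _)
  calc a ^ N * b ^ i = a ^ i * (a ^ (N - i) * b ^ i) := by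
        rw [← mul_assoc, ← pow_add, Nat.add_sub_cancel' hiN]
    _ ≤ a ^ i * (b ^ (N - i) * b ^ i) :=
        mul_le_mul_of_nonneg_left h1 (pow_nonneg ha _)
    _ = b ^ N * a ^ i := by rw [← pow_add, Nat.sub_add_cancel hiN, mul_comm]
end

section
/- Let C ≥ 1 and γ be integers with γ + 1 ≥ C, and let λ be a real number with 0 ≤ λ ≤ C. With b_i(λ) := λ^i / ∏_{k=1}^{i} min(k, C), one has b_{γ+1}(λ) / ∑_{i=0}^{γ+1} b_i(λ) ≤ (C^C/C!) / (∑_{l=0}^{C} C^l/l! + (γ+1−C)·C^C/C!). -/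
open Finset

open scoped Nat

/-!
For `λ ≤ C` the blocking probability is at most its value at `λ = C`: for any positive
`p_i`, the ratio `(x^N / p_N) / ∑_{i ≤ N} x^i / p_i` is monotone in `x ≥ 0`, because after
cross-multiplying it compares `x^N y^i` with `y^N x^i` term by term. At `λ = C` the weights are
`C^i / i!` for `i ≤ C` and constantly `C^C / C!` from `i = C` on, which gives the closed form.
-/

lemma pow_mul_pow_le_pow_mul_pow {x y : ℝ} (hx : 0 ≤ x) (hxy : x ≤ y) {i N : ℕ} (hi : i ≤ N) :
    x ^ N * y ^ i ≤ y ^ N * x ^ i := by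
  obtain ⟨k, rfl⟩ := Nat.exists_eq_add_of_le hi
  have hy : 0 ≤ y := hx.trans hxy
  have hk : x ^ k ≤ y ^ k := pow_le_pow_left₀ hx hxy k
  calc x ^ (i + k) * y ^ i = x ^ i * y ^ i * x ^ k := by ring
    _ ≤ x ^ i * y ^ i * y ^ k := by gcongr
    _ = y ^ (i + k) * x ^ i := by ring

lemma sum_range_pow_div_pos {p : ℕ → ℝ} (hp : ∀ i, 0 < p i) {x : ℝ} (hx : 0 ≤ x) (N : ℕ) :
    0 < ∑ i ∈ range (N + 1), x ^ i / p i := by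
  rw [sum_range_succ']
  exact add_pos_of_nonneg_of_pos (sum_nonneg fun i _ ↦ div_nonneg (pow_nonneg hx _) (hp _).le)
    (by simpa using hp 0)

lemma pow_div_div_sum_pow_div_monotoneOn {p : ℕ → ℝ} (hp : ∀ i, 0 < p i) (N : ℕ) :
    MonotoneOn (fun x : ℝ ↦ x ^ N / p N / ∑ i ∈ range (N + 1), x ^ i / p i) (Set.Ici 0) := by
  intro x (hx : 0 ≤ x) y (hy : 0 ≤ y) hxy
  rw [div_le_div_iff₀ (sum_range_pow_div_pos hp hx N) (sum_range_pow_div_pos hp hy N),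
    mul_sum, mul_sum]
  refine sum_le_sum fun i hi ↦ ?_
  rw [div_mul_div_comm, div_mul_div_comm]
  exact div_le_div_of_nonneg_right
    (pow_mul_pow_le_pow_mul_pow hx hxy (Nat.lt_succ_iff.mp (mem_range.mp hi)))
    (mul_pos (hp N) (hp i)).le

section mmcWeight

variable {C : ℕ}

lemma prod_min_pos (hC : 1 ≤ C) (i : ℕ) : 0 < ∏ k ∈ Icc 1 i, (min k C : ℝ) :=
  prod_pos fun k hk ↦ by
    have : 1 ≤ min k C := le_min (mem_Icc.mp hk).1 hC
    exact_mod_cast this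

lemma prod_min_of_le {i : ℕ} (hi : i ≤ C) : ∏ k ∈ Icc 1 i, (min k C : ℝ) = i ! := by
  rw [← Finset.prod_Ico_id_eq_factorial, Ico_add_one_right_eq_Icc, Nat.cast_prod]
  exact prod_congr rfl fun k hk ↦ min_eq_left (by exact_mod_cast (mem_Icc.mp hk).2.trans hi)

lemma prod_min_of_ge {i : ℕ} (hi : C ≤ i) :
    ∏ k ∈ Icc 1 i, (min k C : ℝ) = C ! * (C : ℝ) ^ (i - C) := by
  induction i, hi using Nat.le_induction with
  | base => simp [prod_min_of_le le_rfl]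
  | succ n hn ih =>
    rw [prod_Icc_succ_top (by omega), ih, Nat.sub_add_comm hn, pow_succ,
      min_eq_right (by exact_mod_cast hn.trans n.le_succ)]
    ring

lemma mmcWeight_self_of_le {i : ℕ} (hi : i ≤ C) : mmcWeight C C i = (C : ℝ) ^ i / i ! := by
  rw [mmcWeight, prod_min_of_le hi]

lemma mmcWeight_self_of_ge (hC : 1 ≤ C) {i : ℕ} (hi : C ≤ i) :
    mmcWeight C C i = (C : ℝ) ^ C / C ! := by
  have hC0 : (C : ℝ) ≠ 0 := by positivity
  obtain ⟨k, rfl⟩ := Nat.exists_eq_add_of_le hi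
  rw [mmcWeight, prod_min_of_ge hi, Nat.add_sub_cancel_left, pow_add,
    mul_div_mul_right _ _ (pow_ne_zero k hC0)]

lemma sum_range_mmcWeight_self (hC : 1 ≤ C) {γ : ℕ} (hγ : C ≤ γ + 1) :
    ∑ i ∈ range (γ + 2), mmcWeight C C i =
      ∑ l ∈ range (C + 1), (C : ℝ) ^ l / l ! + ((γ : ℝ) + 1 - C) * ((C : ℝ) ^ C / C !) := by
  obtain ⟨k, hk⟩ := Nat.exists_eq_add_of_le hγ
  have hk' : (γ : ℝ) + 1 - C = k := by
    rw [sub_eq_iff_eq_add', ← Nat.cast_add_one, hk, Nat.cast_add]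
  rw [show γ + 2 = (C + 1) + k by omega, sum_range_add, hk',
    sum_congr rfl fun i hi ↦ mmcWeight_self_of_le (Nat.lt_succ_iff.mp (mem_range.mp hi)),
    sum_congr rfl fun i _ ↦ mmcWeight_self_of_ge hC (by omega), sum_const, card_range,
    nsmul_eq_mul]

end mmcWeight

/-- The blocking probability of an M/M/C/γ+1 queue with arrival rate `λ ≤ C`
is at most its value at `λ = C`, given in closed form. -/
theorem blocking_prob_bound (C γ : ℕ) (hC : 1 ≤ C) (hγ : C ≤ γ + 1)
    (lam : ℝ) (h0 : 0 ≤ lam) (h1 : lam ≤ C) :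
    mmcWeight C lam (γ + 1) / ∑ i ∈ Finset.range (γ + 2), mmcWeight C lam i ≤
      ((C : ℝ) ^ C / (Nat.factorial C : ℝ)) /
        ((∑ l ∈ Finset.range (C + 1), (C : ℝ) ^ l / (Nat.factorial l : ℝ)) +
          ((γ : ℝ) + 1 - C) * ((C : ℝ) ^ C / (Nat.factorial C : ℝ))) := by
  rw [← sum_range_mmcWeight_self hC hγ, ← mmcWeight_self_of_ge hC hγ]
  exact pow_div_div_sum_pow_div_monotoneOn (prod_min_pos hC) (γ + 1) h0
    (Set.mem_Ici.mpr (h0.trans h1)) h1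
end

section
/- For every real λ with 0 ≤ λ ≤ 1, one has (1 + 2λ)/(1 + λ + λ²) ≤ 2/√3, and equality holds at λ = (√3 − 1)/2. In particular, the maximum of (1+2λ)/(1+λ+λ²) over [0,1] equals 2/√3. -/
/-- `g(1) = 2/√3`: the maximum of `(1+2λ)/(1+λ+λ²)` over `[0,1]` equals `2/√3`,
attained at `λ = (√3 − 1)/2`. -/
theorem g_one_eq :
    (∀ lam : ℝ, 0 ≤ lam → lam ≤ 1 →
        (1 + 2 * lam) / (1 + lam + lam ^ 2) ≤ 2 / Real.sqrt 3) ∧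
      (1 + 2 * ((Real.sqrt 3 - 1) / 2)) /
          (1 + (Real.sqrt 3 - 1) / 2 + ((Real.sqrt 3 - 1) / 2) ^ 2) =
        2 / Real.sqrt 3 := by
  have hs : Real.sqrt 3 ^ 2 = 3 := Real.sq_sqrt (by norm_num)
  have hsp : (0:ℝ) < Real.sqrt 3 := Real.sqrt_pos.mpr (by norm_num)
  constructor
  · intro lam h0 h1
    have hd : (0:ℝ) < 1 + lam + lam ^ 2 := by positivity
    rw [div_le_div_iff₀ hd hsp]
    nlinarith [sq_nonneg (lam - (Real.sqrt 3 - 1) / 2), sq_nonneg (Real.sqrt 3 - 1)]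
  · have hd : (0:ℝ) < 1 + (Real.sqrt 3 - 1) / 2 + ((Real.sqrt 3 - 1) / 2) ^ 2 := by
      nlinarith [sq_nonneg (Real.sqrt 3 - 1), hsp]
    rw [div_eq_div_iff hd.ne' hsp.ne']
    nlinarith [hs]
end

section
/- There exists a unique real λ* ∈ (0,1) satisfying 3λ*⁴ + 4λ*³ + 2λ*² − 4λ* − 1 = 0, and for every λ ∈ [0,1] one has (1 + 2λ + 3λ²)/(1 + λ + λ² + λ³) ≤ (1 + 2λ* + 3λ*²)/(1 + λ* + λ*² + λ*³); that is, the maximum of (1+2λ+3λ²)/(1+λ+λ²+λ³) over [0,1] is attained at the unique root in (0,1) of 3λ⁴+4λ³+2λ²−4λ−1. -/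
private lemma root_gt (l : ℝ) (h0 : 0 < l) (h1 : l < 1)
    (hp : 3 * l ^ 4 + 4 * l ^ 3 + 2 * l ^ 2 - 4 * l - 1 = 0) : 7/10 < l := by
  by_contra h
  push_neg at h
  nlinarith [sq_nonneg l, mul_pos h0 h0, mul_nonneg (mul_nonneg h0.le h0.le) h0.le,
    mul_nonneg (sub_nonneg.2 h) h0.le, mul_nonneg (mul_nonneg (sub_nonneg.2 h) h0.le) h0.le]

/-- `g(2)`: there is a unique root `λ* ∈ (0,1)` of `3λ⁴+4λ³+2λ²−4λ−1`, and the
maximum of `(1+2λ+3λ²)/(1+λ+λ²+λ³)` over `[0,1]` is attained at `λ*`. -/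
theorem g_two_eq :
    ∃ l : ℝ, l ∈ Set.Ioo (0 : ℝ) 1 ∧
      3 * l ^ 4 + 4 * l ^ 3 + 2 * l ^ 2 - 4 * l - 1 = 0 ∧
      (∀ l' ∈ Set.Ioo (0 : ℝ) 1,
        3 * l' ^ 4 + 4 * l' ^ 3 + 2 * l' ^ 2 - 4 * l' - 1 = 0 → l' = l) ∧
      ∀ x ∈ Set.Icc (0 : ℝ) 1,
        (1 + 2 * x + 3 * x ^ 2) / (1 + x + x ^ 2 + x ^ 3) ≤
          (1 + 2 * l + 3 * l ^ 2) / (1 + l + l ^ 2 + l ^ 3) := by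
  set p : ℝ → ℝ := fun t => 3 * t ^ 4 + 4 * t ^ 3 + 2 * t ^ 2 - 4 * t - 1 with hpdef
  have hcont : ContinuousOn p (Set.Icc (1/2 : ℝ) 1) := by
    apply Continuous.continuousOn; continuity
  have hivt : (0 : ℝ) ∈ p '' Set.Ioo (1/2 : ℝ) 1 := by
    apply intermediate_value_Ioo (by norm_num) hcont
    constructor <;> norm_num [hpdef]
  obtain ⟨l, hl, hpl⟩ := hivt
  have h0 : 0 < l := lt_trans (by norm_num) hl.1
  have h1 : l < 1 := hl.2
  have hroot : 3 * l ^ 4 + 4 * l ^ 3 + 2 * l ^ 2 - 4 * l - 1 = 0 := hpl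
  have hl7 : 7/10 < l := root_gt l h0 h1 hroot
  refine ⟨l, ⟨h0, h1⟩, hroot, ?_, ?_⟩
  · rintro l' ⟨h0', h1'⟩ hroot'
    have hl7' : 7/10 < l' := root_gt l' h0' h1' hroot'
    by_contra hne
    have key : (l' - l) * (3*(l'^3 + l'^2*l + l'*l^2 + l^3) + 4*(l'^2 + l'*l + l^2)
        + 2*(l' + l) - 4) = 0 := by ring_nf; nlinarith [hroot, hroot']
    have hq : 0 < 3*(l'^3 + l'^2*l + l'*l^2 + l^3) + 4*(l'^2 + l'*l + l^2) + 2*(l' + l) - 4 := by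
      nlinarith [mul_pos h0 h0', sq_nonneg l, sq_nonneg l', mul_pos (mul_pos h0 h0) h0,
        mul_pos (mul_pos h0' h0') h0']
    have := mul_eq_zero.1 key
    rcases this with h | h
    · exact hne (by linarith)
    · linarith
  · intro x ⟨hx0, hx1⟩
    have hDx : 0 < 1 + x + x ^ 2 + x ^ 3 := by positivity
    have hDl : 0 < 1 + l + l ^ 2 + l ^ 3 := by positivity
    rw [div_le_div_iff₀ hDx hDl]
    have hq : 0 ≤ 3*x*l^2 + 2*x*l + x + 3*l^3 + 4*l^2 + l - 2 := by
      nlinarith [mul_nonneg hx0 (sq_nonneg l), mul_nonneg hx0 h0.le,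
        mul_pos (mul_pos h0 h0) h0, sq_nonneg l]
    nlinarith [mul_nonneg (sq_nonneg (x - l)) hq, hroot, sq_nonneg (x - l)]
end

section
/- Let γ ≥ 3 be an integer. The function f_γ(λ) := (∑_{j=1}^{γ+1} j λ^j)/(∑_{i=1}^{γ+2} λ^i) is nondecreasing on (0, 1]; that is, for all 0 < λ₁ ≤ λ₂ ≤ 1, f_γ(λ₁) ≤ f_γ(λ₂). -/
open Finset

/-!
Write `f = N / D` with `n = γ + 2`, `N x = ∑_{j<n} j xʲ`, `D x = ∑_{i≤n} xⁱ`. Then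
`x (N' D - N D') = ∑_{j<n, i≤n} j (j - i) x^{i+j} = ∑ₛ cₛ xˢ`, where `cₛ = s(s-1)(s-2)/6 ≥ 0`
for `s ≤ n` and `c_{n+ρ} = t((t-1)(t-2) - 6ρ)/6` with `t = n - ρ`, whose sign is that of a
quantity decreasing in `ρ`. So the coefficients change sign once, from `+` to `-`, at some `m`,
and then `cₛ xˢ ≥ cₛ xᵐ` termwise on `[0, 1]`; the sum is therefore at least
`xᵐ ∑ₛ cₛ = xᵐ n²(n-1)(n-5)/12`, which is nonnegative because `n ≥ 5`.
-/

theorem pow_mul_sum_le_sum_mul_pow (s : Finset ℕ) {c : ℕ → ℝ} {m : ℕ} {x : ℝ}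
    (hx₀ : 0 ≤ x) (hx₁ : x ≤ 1) (hlt : ∀ k ∈ s, k < m → 0 ≤ c k)
    (hgt : ∀ k ∈ s, m < k → c k ≤ 0) :
    x ^ m * ∑ k ∈ s, c k ≤ ∑ k ∈ s, c k * x ^ k := by
  rw [mul_sum]
  refine sum_le_sum fun k hk => ?_
  rcases lt_trichotomy k m with hkm | rfl | hmk
  · nlinarith [hlt k hk hkm, pow_le_pow_of_le_one hx₀ hx₁ hkm.le]
  · rw [mul_comm]
  · nlinarith [hgt k hk hmk, pow_le_pow_of_le_one hx₀ hx₁ hmk.le]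

theorem sum_mul_pow_nonneg_of_sign_change (d : ℕ) {c : ℕ → ℝ} {x : ℝ}
    (hx₀ : 0 ≤ x) (hx₁ : x ≤ 1) (hc : ∀ k l, k < l → 0 < c l → 0 ≤ c k)
    (hsum : 0 ≤ ∑ k ∈ range d, c k) :
    0 ≤ ∑ k ∈ range d, c k * x ^ k := by
  set m := Nat.findGreatest (fun k => 0 < c k) d
  refine (mul_nonneg (pow_nonneg hx₀ m) hsum).trans
    (pow_mul_sum_le_sum_mul_pow _ hx₀ hx₁ (fun k _ hkm => ?_) fun k hk hmk => ?_)
  · exact hc k m hkm (Nat.findGreatest_of_ne_zero rfl (Nat.ne_zero_of_lt hkm))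
  · exact not_lt.1 (Nat.findGreatest_is_greatest hmk (by simp at hk; omega))

theorem monotoneOn_div_of_hasDerivAt {f g f' g' : ℝ → ℝ} {D : Set ℝ} (hD : Convex ℝ D)
    (hf : ∀ x ∈ D, HasDerivAt f (f' x) x) (hg : ∀ x ∈ D, HasDerivAt g (g' x) x)
    (hg₀ : ∀ x ∈ D, g x ≠ 0) (h : ∀ x ∈ interior D, 0 ≤ f' x * g x - f x * g' x) :
    MonotoneOn (fun x => f x / g x) D :=
  monotoneOn_of_hasDerivWithinAt_nonneg hD
    (fun x hx => ((hf x hx).continuousAt.div (hg x hx).continuousAt (hg₀ x hx)).continuousWithinAt)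
    (fun x hx => ((hf x (interior_subset hx)).div (hg x (interior_subset hx))
      (hg₀ x (interior_subset hx))).hasDerivWithinAt)
    fun x hx => div_nonneg (h x hx) (sq_nonneg _)

theorem hasDerivAt_sum_mul_pow (s : Finset ℕ) (a : ℕ → ℝ) {x : ℝ} (hx : x ≠ 0) :
    HasDerivAt (fun y => ∑ k ∈ s, a k * y ^ k) ((∑ k ∈ s, k * a k * x ^ k) / x) x := by
  refine (HasDerivAt.fun_sum fun k _ => (hasDerivAt_pow k x).const_mul (a k)).congr_deriv ?_
  rw [sum_div]
  refine sum_congr rfl fun k _ => ?_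
  rcases k with _ | k
  · simp
  · field_simp
    push_cast
    ring

theorem sum_range_mul_two_mul_sub (m : ℕ) (s : ℝ) :
    ∑ j ∈ range m, (j : ℝ) * (2 * j - s) = m * (m - 1) * (4 * m - 2 - 3 * s) / 6 := by
  induction m with
  | zero => simp
  | succ m ih => rw [sum_range_succ, ih]; push_cast; ring

theorem sum_Icc_mul_two_mul_sub {a b : ℕ} (s : ℝ) (h : a ≤ b + 1) :
    ∑ j ∈ Icc a b, (j : ℝ) * (2 * j - s) =
      (b + 1) * b * (4 * b + 2 - 3 * s) / 6 - a * (a - 1) * (4 * a - 2 - 3 * s) / 6 := by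
  rw [← Ico_add_one_right_eq_Icc, sum_Ico_eq_sub _ h, sum_range_mul_two_mul_sub,
    sum_range_mul_two_mul_sub]
  push_cast
  ring

noncomputable def wronskianCoeff (n s : ℕ) : ℝ :=
  ∑ j ∈ Icc (max 1 (s - n)) (min (n - 1) (s - 1)), (j : ℝ) * (2 * j - s)

theorem sum_sum_mul_sub_mul_pow (n : ℕ) (x : ℝ) :
    ∑ j ∈ Icc 1 (n - 1), ∑ i ∈ Icc 1 n, (j : ℝ) * (j - i) * x ^ (j + i) =
      ∑ s ∈ range (2 * n), wronskianCoeff n s * x ^ s := by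
  have shift : ∀ j : ℕ, ∑ i ∈ Icc 1 n, (j : ℝ) * (j - i) * x ^ (j + i) =
      ∑ s ∈ Icc (j + 1) (j + n), (j : ℝ) * (2 * j - s) * x ^ s := by
    intro j
    rw [← map_add_left_Icc, sum_map]
    refine sum_congr rfl fun i _ => ?_
    simp only [addLeftEmbedding_apply]
    push_cast
    ring
  simp only [shift, wronskianCoeff, sum_mul]
  exact sum_comm' fun j s => by simp only [mem_Icc, mem_range]; omega

theorem wronskianCoeff_of_le {n s : ℕ} (h : s ≤ n) :
    wronskianCoeff n s = s * (s - 1) * (s - 2) / 6 := by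
  rcases Nat.eq_zero_or_pos s with rfl | hs
  · simp [wronskianCoeff]
  rw [wronskianCoeff, show max 1 (s - n) = 1 by omega, show min (n - 1) (s - 1) = s - 1 by omega,
    sum_Icc_mul_two_mul_sub _ (by omega), Nat.cast_sub hs]
  push_cast
  ring

theorem wronskianCoeff_add {n ρ : ℕ} (hρ : 1 ≤ ρ) (h : ρ < n) :
    wronskianCoeff n (n + ρ) = (n - ρ) * ((n - ρ - 1) * (n - ρ - 2) - 6 * ρ) / 6 := by
  rw [wronskianCoeff, show max 1 (n + ρ - n) = ρ by omega,
    show min (n - 1) (n + ρ - 1) = n - 1 by omega, sum_Icc_mul_two_mul_sub _ (by omega),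
    Nat.cast_sub (by omega)]
  push_cast
  ring

theorem wronskianCoeff_of_two_mul_le {n s : ℕ} (h : 2 * n ≤ s) : wronskianCoeff n s = 0 := by
  rw [wronskianCoeff, Icc_eq_empty (by omega), sum_empty]

theorem sum_wronskianCoeff (n : ℕ) :
    ∑ s ∈ range (2 * n), wronskianCoeff n s = n ^ 2 * (n - 1) * (n - 5) / 12 := by
  have := sum_sum_mul_sub_mul_pow n 1
  simp only [one_pow, mul_one] at this
  rw [← this]
  have gauss : ∀ m : ℕ, ∑ i ∈ Icc 1 m, (i : ℝ) = m * (m + 1) / 2 := by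
    intro m
    induction m with
    | zero => simp
    | succ m ih => rw [sum_Icc_succ_top (by omega), ih]; push_cast; ring
  have inner : ∀ j : ℕ, ∑ i ∈ Icc 1 n, (j : ℝ) * (j - i) = n / 2 * (j * (2 * j - (n + 1))) := by
    intro j
    rw [← mul_sum, sum_sub_distrib, sum_const, Nat.card_Icc, gauss, nsmul_eq_mul]
    push_cast
    ring
  rcases Nat.eq_zero_or_pos n with rfl | hn
  · simp
  rw [sum_congr rfl fun j _ => inner j, ← mul_sum, sum_Icc_mul_two_mul_sub _ (by omega),
    Nat.cast_sub hn]
  push_cast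
  ring

theorem wronskianCoeff_nonneg_of_lt {n k l : ℕ} (hkl : k < l) (hl : 0 < wronskianCoeff n l) :
    0 ≤ wronskianCoeff n k := by
  rcases le_or_gt k n with hkn | hnk
  · rw [wronskianCoeff_of_le hkn]
    rcases k with _ | _ | k
    · simp
    · simp
    · push_cast; ring_nf; positivity
  rcases le_or_gt (2 * n) l with hl2 | hl2
  · rw [wronskianCoeff_of_two_mul_le hl2] at hl; exact absurd hl (lt_irrefl 0)
  obtain ⟨ρ, rfl⟩ : ∃ ρ, k = n + ρ := ⟨k - n, by omega⟩
  obtain ⟨σ, rfl⟩ : ∃ σ, l = n + σ := ⟨l - n, by omega⟩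
  rw [wronskianCoeff_add (by omega) (by omega)] at hl ⊢
  have hρσ : (ρ : ℝ) + 1 ≤ σ := by exact_mod_cast (by omega : ρ + 1 ≤ σ)
  have hσn : (σ : ℝ) + 1 ≤ n := by exact_mod_cast (by omega : σ + 1 ≤ n)
  have hρ : (1 : ℝ) ≤ ρ := by exact_mod_cast (by omega : 1 ≤ ρ)
  have hQσ : 0 < ((n : ℝ) - σ - 1) * (n - σ - 2) - 6 * σ := by
    by_contra! h
    nlinarith
  have hQρ : 0 ≤ ((n : ℝ) - ρ - 1) * (n - ρ - 2) - 6 * ρ := by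
    nlinarith
  have : (0 : ℝ) ≤ n - ρ := by linarith
  positivity

theorem sum_sum_mul_sub_mul_pow_nonneg {n : ℕ} (hn : 5 ≤ n) {x : ℝ} (hx₀ : 0 ≤ x) (hx₁ : x ≤ 1) :
    0 ≤ ∑ j ∈ Icc 1 (n - 1), ∑ i ∈ Icc 1 n, (j : ℝ) * (j - i) * x ^ (j + i) := by
  rw [sum_sum_mul_sub_mul_pow]
  refine sum_mul_pow_nonneg_of_sign_change _ hx₀ hx₁ (fun _ _ => wronskianCoeff_nonneg_of_lt) ?_
  rw [sum_wronskianCoeff]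
  have : (5 : ℝ) ≤ n := by exact_mod_cast hn
  have : (0 : ℝ) ≤ n - 1 := by linarith
  have : (0 : ℝ) ≤ n - 5 := by linarith
  positivity

theorem monotoneOn_sum_mul_pow_div_sum_pow {n : ℕ} (hn : 5 ≤ n) :
    MonotoneOn (fun x : ℝ => (∑ j ∈ Icc 1 (n - 1), (j : ℝ) * x ^ j) / ∑ i ∈ Icc 1 n, x ^ i)
      (Set.Ioc 0 1) := by
  have hden : ∀ x ∈ Set.Ioc (0 : ℝ) 1, HasDerivAt (fun y => ∑ i ∈ Icc 1 n, y ^ i)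
      ((∑ i ∈ Icc 1 n, (i : ℝ) * x ^ i) / x) x := fun x hx => by
    simpa using hasDerivAt_sum_mul_pow (Icc 1 n) (fun _ => 1) hx.1.ne'
  refine monotoneOn_div_of_hasDerivAt (convex_Ioc 0 1)
    (fun x hx => hasDerivAt_sum_mul_pow _ (fun j => (j : ℝ)) hx.1.ne') hden
    (fun x hx => (sum_pos (fun i _ => pow_pos hx.1 i) ⟨1, by simp; omega⟩).ne') fun x hx => ?_
  rw [interior_Ioc] at hx
  have wronskian : (∑ j ∈ Icc 1 (n - 1), (j : ℝ) * j * x ^ j) / x * ∑ i ∈ Icc 1 n, x ^ i -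
      (∑ j ∈ Icc 1 (n - 1), (j : ℝ) * x ^ j) * ((∑ i ∈ Icc 1 n, (i : ℝ) * x ^ i) / x) =
      (∑ j ∈ Icc 1 (n - 1), ∑ i ∈ Icc 1 n, (j : ℝ) * (j - i) * x ^ (j + i)) / x := by
    rw [div_mul_eq_mul_div, mul_div_assoc', ← sub_div, sum_mul_sum, sum_mul_sum,
      ← sum_sub_distrib]
    congr 1
    refine sum_congr rfl fun j _ => ?_
    rw [← sum_sub_distrib]
    refine sum_congr rfl fun i _ => ?_
    rw [pow_add]
    ring
  rw [wronskian]
  exact div_nonneg (sum_sum_mul_sub_mul_pow_nonneg hn hx.1.le hx.2.le) hx.1.le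

/-- Lemma 3 (key step): for `γ ≥ 3`, the function
`f_γ(λ) = (∑_{j=1}^{γ+1} j λ^j)/(∑_{i=1}^{γ+2} λ^i)` is nondecreasing on `(0,1]`. -/
theorem f_monotone (γ : ℕ) (hγ : 3 ≤ γ) (l₁ l₂ : ℝ)
    (h0 : 0 < l₁) (h12 : l₁ ≤ l₂) (h1 : l₂ ≤ 1) :
    (∑ j ∈ Finset.Icc 1 (γ + 1), (j : ℝ) * l₁ ^ j) /
        (∑ i ∈ Finset.Icc 1 (γ + 2), l₁ ^ i) ≤
      (∑ j ∈ Finset.Icc 1 (γ + 1), (j : ℝ) * l₂ ^ j) /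
        (∑ i ∈ Finset.Icc 1 (γ + 2), l₂ ^ i) :=
  monotoneOn_sum_mul_pow_div_sum_pow (n := γ + 2) (by omega) ⟨h0, h12.trans h1⟩
    ⟨h0.trans_le h12, h1⟩ h12
end

section
/- Let γ ≥ 3 be an integer. For every λ ∈ (0, 1], one has (∑_{j=1}^{γ+1} j λ^j)/(∑_{i=1}^{γ+2} λ^i) ≤ (γ+1)/2, with equality when λ = 1. Hence the maximum of f_γ over (0,1] equals (γ+1)/2. -/
open Finset

/-- Termwise bound: for `i ≤ m+3`, `λ^i ≥ λ^{m+5} + 2(1-λ)λ^{m+4}`. -/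
lemma term_ge (m i : ℕ) (him : i ≤ m + 3) (lam : ℝ) (h0 : 0 < lam) (h1 : lam ≤ 1) :
    lam ^ (m + 5) + 2 * (1 - lam) * lam ^ (m + 4) ≤ lam ^ i := by
  have hb : lam ^ (m + 3) ≤ lam ^ i := pow_le_pow_of_le_one h0.le h1 him
  have h4 : lam ^ (m + 4) = lam ^ (m + 3) * lam := pow_succ _ _
  have h5 : lam ^ (m + 5) = lam ^ (m + 3) * lam * lam := by
    rw [pow_succ, h4]
  nlinarith [mul_nonneg (pow_nonneg h0.le (m + 3)) (sq_nonneg (1 - lam))]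

/-- `∑_{i=1}^{n+1} λ^i ≥ 2(n+1)λ^{n+1} - (n+1)λ^{n+2}` for `n ≥ 4`. -/
lemma sum_ge (n : ℕ) (hn : 4 ≤ n) (lam : ℝ) (h0 : 0 < lam) (h1 : lam ≤ 1) :
    2 * ((n : ℝ) + 1) * lam ^ (n + 1) - ((n : ℝ) + 1) * lam ^ (n + 2) ≤
      ∑ i ∈ Icc 1 (n + 1), lam ^ i := by
  obtain ⟨m, rfl⟩ : ∃ m, n = m + 4 := ⟨n - 4, by omega⟩
  have hsplit : ∑ i ∈ Icc 1 (m + 4 + 1), lam ^ i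
      = (∑ i ∈ Icc 1 (m + 3), lam ^ i) + lam ^ (m + 4) + lam ^ (m + 5) := by
    rw [show m + 4 + 1 = (m + 4) + 1 from rfl, Finset.sum_Icc_succ_top (by omega),
      show m + 4 = (m + 3) + 1 from rfl, Finset.sum_Icc_succ_top (by omega)]
  have hterm : ((m : ℝ) + 3) * (lam ^ (m + 5) + 2 * (1 - lam) * lam ^ (m + 4)) ≤
      ∑ i ∈ Icc 1 (m + 3), lam ^ i := by
    have := Finset.sum_le_sum (f := fun _ : ℕ => lam ^ (m + 5) + 2 * (1 - lam) * lam ^ (m + 4))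
      (g := fun i : ℕ => lam ^ i) (s := Icc 1 (m + 3))
      (fun i hi => term_ge m i (by simp at hi; omega) lam h0 h1)
    rw [Finset.sum_const, Nat.card_Icc] at this
    have hc : ((m + 3 + 1 - 1 : ℕ) : ℝ) = (m : ℝ) + 3 := by push_cast [Nat.add_sub_cancel]; ring
    calc ((m : ℝ) + 3) * (lam ^ (m + 5) + 2 * (1 - lam) * lam ^ (m + 4))
        = (m + 3 + 1 - 1 : ℕ) • (lam ^ (m + 5) + 2 * (1 - lam) * lam ^ (m + 4)) := by
          rw [nsmul_eq_mul, hc]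
      _ ≤ _ := this
  rw [hsplit]
  have h5 : lam ^ (m + 5) = lam ^ (m + 4) * lam := pow_succ _ _
  have h6 : lam ^ (m + 4 + 2) = lam ^ (m + 4) * lam * lam := by
    rw [show m + 4 + 2 = (m + 5) + 1 from rfl, pow_succ, h5]
  have hfin : 0 ≤ lam ^ (m + 4) * (1 - lam) * (2 * (m : ℝ) + 7 - ((m : ℝ) + 5) * lam) := by
    apply mul_nonneg (mul_nonneg (pow_nonneg h0.le _) (by linarith))
    nlinarith [Nat.cast_nonneg (α := ℝ) m]
  push_cast
  nlinarith [hterm, hfin]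

/-- Main inequality: `2∑_{j=1}^n jλ^j ≤ n ∑_{i=1}^{n+1} λ^i` for `n ≥ 4`, `λ ∈ (0,1]`. -/
lemma key (n : ℕ) (hn : 4 ≤ n) (lam : ℝ) (h0 : 0 < lam) (h1 : lam ≤ 1) :
    2 * ∑ j ∈ Icc 1 n, (j : ℝ) * lam ^ j ≤ (n : ℝ) * ∑ i ∈ Icc 1 (n + 1), lam ^ i := by
  induction n, hn using Nat.le_induction with
  | base =>
    rw [show (Icc 1 4 : Finset ℕ) = {1,2,3,4} by rfl, show (Icc 1 5 : Finset ℕ) = {1,2,3,4,5} by rfl]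
    norm_num [Finset.sum_insert, Finset.mem_insert]
    nlinarith [mul_nonneg (mul_nonneg h0.le (sub_nonneg.2 h1))
      (show (0:ℝ) ≤ 1+lam-2*lam^3 by
        nlinarith [pow_le_pow_of_le_one h0.le h1 (show 1≤3 by norm_num)]), sq_nonneg lam]
  | succ n hn ih =>
    have hs := sum_ge n hn lam h0 h1
    rw [Finset.sum_Icc_succ_top (show 1 ≤ n + 1 by omega),
      show n + 1 + 1 = (n + 1) + 1 from rfl,
      Finset.sum_Icc_succ_top (show 1 ≤ (n + 1) + 1 by omega)]
    push_cast
    nlinarith [ih, hs]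

/-- `g(γ) = (γ+1)/2` for `γ ≥ 3`: the ratio
`f_γ(λ) = (∑_{j=1}^{γ+1} j λ^j)/(∑_{i=1}^{γ+2} λ^i)` is at most `(γ+1)/2` on
`(0,1]`, with equality at `λ = 1`. -/
theorem g_eq_for_large_gamma (γ : ℕ) (hγ : 3 ≤ γ) :
    (∀ lam : ℝ, 0 < lam → lam ≤ 1 →
        (∑ j ∈ Finset.Icc 1 (γ + 1), (j : ℝ) * lam ^ j) /
            (∑ i ∈ Finset.Icc 1 (γ + 2), lam ^ i) ≤ ((γ : ℝ) + 1) / 2) ∧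
      (∑ j ∈ Finset.Icc 1 (γ + 1), (j : ℝ) * (1 : ℝ) ^ j) /
          (∑ i ∈ Finset.Icc 1 (γ + 2), (1 : ℝ) ^ i) = ((γ : ℝ) + 1) / 2 := by
  constructor
  · intro lam h0 h1
    have hS : 0 < ∑ i ∈ Finset.Icc 1 (γ + 2), lam ^ i :=
      Finset.sum_pos (fun i _ => pow_pos h0 i) ⟨1, by simp⟩
    rw [div_le_div_iff₀ hS (by norm_num : (0:ℝ) < 2)]
    have := key (γ + 1) (by omega) lam h0 h1
    rw [show γ + 1 + 1 = γ + 2 from rfl] at this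
    push_cast at this
    linarith
  · have hnum : ∑ j ∈ Finset.Icc 1 (γ + 1), (j : ℝ) * (1 : ℝ) ^ j
        = ((γ : ℝ) + 1) * ((γ : ℝ) + 2) / 2 := by
      simp only [one_pow, mul_one]
      clear hγ
      induction γ with
      | zero => norm_num
      | succ m ih =>
        rw [show m + 1 + 1 = (m + 1) + 1 from rfl, Finset.sum_Icc_succ_top (by omega), ih]
        push_cast; ring
    have hden : ∑ i ∈ Finset.Icc 1 (γ + 2), (1 : ℝ) ^ i = (γ : ℝ) + 2 := by
      simp [Nat.card_Icc]
    have h2 : (γ : ℝ) + 2 ≠ 0 := by positivity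
    rw [hnum, hden]
    field_simp
end

section
/- Let γ ≥ 3 be an integer. For every real λ ∈ [0,1], one has ∑_{i=0}^{γ+1} ∑_{j=0}^{γ+1} (j² − j(i+1)) · λ^{i+j} ≥ 0, where the coefficients j² − j(i+1) are integers. -/
open Finset

private lemma sumId (m : ℕ) : (∑ j ∈ Finset.range m, (j:ℤ)) * 2 = m * (m - 1) := by
  induction m with
  | zero => simp
  | succ m ih =>
    rw [Finset.sum_range_succ]
    push_cast
    push_cast at ih
    ring_nf
    ring_nf at ih
    linarith

private lemma sumSq (m : ℕ) : (∑ j ∈ Finset.range m, (j:ℤ)^2) * 6 = m * (m - 1) * (2*m - 1) := by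
  induction m with
  | zero => simp
  | succ m ih =>
    rw [Finset.sum_range_succ]
    push_cast
    push_cast at ih
    ring_nf
    ring_nf at ih
    linarith

private lemma splitSum (c : ℤ) (s : Finset ℕ) :
    ∑ j ∈ s, (2*(j:ℤ)^2 - c*(j:ℤ))
      = 2 * (∑ j ∈ s, (j:ℤ)^2) - c * (∑ j ∈ s, (j:ℤ)) := by
  rw [Finset.sum_sub_distrib, Finset.mul_sum, Finset.mul_sum]

/-- coefficient of λ^k in the double sum, with n = γ+1 -/
private def coefC (n k : ℕ) : ℤ :=
  ∑ j ∈ Finset.Ico (k - n) (min k n + 1), (2*(j:ℤ)^2 - ((k:ℤ)+1)*(j:ℤ))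

private lemma coefC_low (n k : ℕ) (h : k ≤ n) :
    6 * coefC n k = ((k:ℤ)+1) * k * ((k:ℤ)-1) := by
  have h1 : k - n = 0 := Nat.sub_eq_zero_of_le h
  have h2 : min k n = k := min_eq_left h
  rw [coefC, h1, h2, ← Finset.range_eq_Ico, splitSum]
  have e1 := sumSq (k+1)
  have e2 := sumId (k+1)
  push_cast at e1 e2 ⊢
  linear_combination 2 * e1 - 3 * ((k:ℤ)+1) * e2

private lemma coefC_high (n d : ℕ) (hd : 1 ≤ d) (hdn : d ≤ n) :
    6 * coefC n (n + d) = ((n:ℤ)-d+1) * (((n:ℤ)-d)^2 + 5*((n:ℤ)-d) - 6*n) := by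
  have h1 : n + d - n = d := by omega
  have h2 : min (n + d) n = n := by omega
  rw [coefC, h1, h2, Finset.sum_Ico_eq_sub _ (by omega), splitSum, splitSum]
  have e1 := sumSq (n+1)
  have e2 := sumId (n+1)
  have e3 := sumSq d
  have e4 := sumId d
  have hc : ((n:ℤ) + d : ℤ) = ((n + d : ℕ) : ℤ) := by push_cast; ring
  push_cast at e1 e2 e3 e4 ⊢
  linear_combination 2 * e1 - 3 * ((n:ℤ)+(d:ℤ)+1) * e2 - 2 * e3 + 3 * ((n:ℤ)+(d:ℤ)+1) * e4

private lemma coefC_nonneg (n k : ℕ) (h : k ≤ n) : 0 ≤ coefC n k := by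
  have h6 := coefC_low n k h
  have : (0:ℤ) ≤ ((k:ℤ)+1) * k * ((k:ℤ)-1) := by
    rcases Nat.eq_zero_or_pos k with hk | hk
    · subst hk; simp
    · have : (1:ℤ) ≤ (k:ℤ) := by exact_mod_cast hk
      have h0 : (0:ℤ) ≤ (k:ℤ) := by positivity
      exact mul_nonneg (mul_nonneg (by linarith) h0) (by linarith)
  linarith

private lemma coefC_mono (n k k' : ℕ) (hkk : k ≤ k') (hk' : k' ≤ 2*n)
    (hneg : coefC n k < 0) : coefC n k' ≤ 0 := by
  have hkn : n < k := by
    by_contra hc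
    exact absurd (coefC_nonneg n k (by omega)) (by linarith)
  -- write k = n + d, k' = n + d'
  obtain ⟨d, rfl⟩ : ∃ d, k = n + d := ⟨k - n, by omega⟩
  obtain ⟨d', rfl⟩ : ∃ d', k' = n + d' := ⟨k' - n, by omega⟩
  have hd1 : 1 ≤ d := by omega
  have hd'n : d' ≤ n := by omega
  have hdd : d ≤ d' := by omega
  have e1 := coefC_high n d hd1 (by omega)
  have e2 := coefC_high n d' (by omega) hd'n
  have hfac : (0:ℤ) < (n:ℤ) - d + 1 := by
    have : (d:ℤ) ≤ (n:ℤ) := by exact_mod_cast (by omega : d ≤ n)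
    linarith
  have hneg6 : ((n:ℤ)-d+1) * (((n:ℤ)-d)^2 + 5*((n:ℤ)-d) - 6*n) < 0 := by linarith
  have hinner : ((n:ℤ)-d)^2 + 5*((n:ℤ)-d) - 6*n < 0 := by
    by_contra hc
    push_neg at hc
    nlinarith
  have hdd' : (d:ℤ) ≤ (d':ℤ) := by exact_mod_cast hdd
  have hd'nz : (d':ℤ) ≤ (n:ℤ) := by exact_mod_cast hd'n
  have h0d : (0:ℤ) ≤ (n:ℤ) - d' := by linarith
  have hinner' : ((n:ℤ)-d')^2 + 5*((n:ℤ)-d') - 6*n < 0 := by nlinarith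
  have hfac' : (0:ℤ) < (n:ℤ) - d' + 1 := by linarith
  nlinarith

private lemma key_s9 (n : ℕ) (lam : ℝ) :
    ∑ i ∈ Finset.range (n + 1), ∑ j ∈ Finset.range (n + 1),
        (((j : ℤ) ^ 2 - (j : ℤ) * ((i : ℤ) + 1) : ℤ) : ℝ) * lam ^ (i + j)
      = ∑ k ∈ Finset.range (2*n + 1), (coefC n k : ℝ) * lam ^ k := by
  have rhs : ∀ k, (coefC n k : ℝ) * lam ^ k
      = ∑ j ∈ Finset.Ico (k - n) (min k n + 1),
          ((2*(j:ℝ)^2 - ((k:ℝ)+1)*(j:ℝ)) * lam ^ k) := by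
    intro k
    rw [coefC]
    push_cast
    rw [Finset.sum_mul]
  calc ∑ i ∈ Finset.range (n + 1), ∑ j ∈ Finset.range (n + 1),
        (((j : ℤ) ^ 2 - (j : ℤ) * ((i : ℤ) + 1) : ℤ) : ℝ) * lam ^ (i + j)
      = ∑ p ∈ Finset.range (n+1) ×ˢ Finset.range (n+1),
          (((p.2 : ℝ) ^ 2 - (p.2 : ℝ) * ((p.1 : ℝ) + 1)) * lam ^ (p.1 + p.2)) := by
        rw [Finset.sum_product]
        push_cast
        rfl
    _ = ∑ q ∈ (Finset.range (2*n+1)).sigma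
          (fun k => Finset.Ico (k - n) (min k n + 1)),
          ((2*(q.2:ℝ)^2 - ((q.1:ℝ)+1)*(q.2:ℝ)) * lam ^ q.1) := by
        refine Finset.sum_nbij' (fun p => ⟨p.1 + p.2, p.2⟩) (fun q => (q.1 - q.2, q.2))
          ?_ ?_ ?_ ?_ ?_
        · rintro ⟨i, j⟩ hp
          simp only [Finset.mem_product, Finset.mem_range] at hp
          simp only [Finset.mem_sigma, Finset.mem_range, Finset.mem_Ico]
          omega
        · rintro ⟨k, j⟩ hq
          simp only [Finset.mem_sigma, Finset.mem_range, Finset.mem_Ico] at hq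
          simp only [Finset.mem_product, Finset.mem_range]
          omega
        · rintro ⟨i, j⟩ hp
          simp
        · rintro ⟨k, j⟩ hq
          simp only [Finset.mem_sigma, Finset.mem_range, Finset.mem_Ico] at hq
          have : k - j + j = k := by omega
          simp [this]
        · rintro ⟨i, j⟩ hp
          simp only
          push_cast
          ring
    _ = ∑ k ∈ Finset.range (2*n+1), ∑ j ∈ Finset.Ico (k - n) (min k n + 1),
          ((2*(j:ℝ)^2 - ((k:ℝ)+1)*(j:ℝ)) * lam ^ k) := by
        rw [Finset.sum_sigma']
    _ = ∑ k ∈ Finset.range (2*n + 1), (coefC n k : ℝ) * lam ^ k := by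
        exact Finset.sum_congr rfl (fun k _ => (rhs k).symm)

private lemma totalZ (n : ℕ) (hn : 4 ≤ n) :
    0 ≤ ∑ i ∈ Finset.range (n+1), ∑ j ∈ Finset.range (n+1),
        ((j:ℤ)^2 - (j:ℤ)*((i:ℤ)+1)) := by
  have e : ∀ i : ℕ, ∑ j ∈ Finset.range (n+1), ((j:ℤ)^2 - (j:ℤ)*((i:ℤ)+1))
      = (∑ j ∈ Finset.range (n+1), (j:ℤ)^2)
        - ((i:ℤ)+1) * (∑ j ∈ Finset.range (n+1), (j:ℤ)) := by
    intro i
    rw [Finset.sum_sub_distrib, Finset.mul_sum]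
    congr 1
    exact Finset.sum_congr rfl (fun j _ => by ring)
  rw [Finset.sum_congr rfl (fun i _ => e i), Finset.sum_sub_distrib,
    Finset.sum_const, Finset.card_range, ← Finset.sum_mul]
  have e2 : ∑ i ∈ Finset.range (n+1), ((i:ℤ)+1)
      = (∑ i ∈ Finset.range (n+1), (i:ℤ)) + (n+1) := by
    rw [Finset.sum_add_distrib, Finset.sum_const, Finset.card_range]
    ring
  rw [e2]
  simp only [nsmul_eq_mul]
  have h1 := sumId (n+1)
  have h2 := sumSq (n+1)
  have hn' : (4:ℤ) ≤ (n:ℤ) := by exact_mod_cast hn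
  set B := ∑ i ∈ Finset.range (n+1), (i:ℤ) with hB
  set Q := ∑ j ∈ Finset.range (n+1), (j:ℤ)^2 with hQ
  have hB2 : (B*2)*(B*2) = (((n:ℤ)+1)*((n:ℤ)+1-1))^2 := by
    push_cast at h1
    rw [h1]; ring
  have h12 : 12 * (((n:ℕ):ℤ)+1) * Q - 12 * ((B + ((n:ℤ)+1)) * B)
      = (n:ℤ)*((n:ℤ)+1)^2*((n:ℤ)-4) := by
    push_cast at h1 h2
    linear_combination 2*((n:ℤ)+1)*h2 - 6*((n:ℤ)+1)*h1 - 3*hB2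
  have hpos : 0 ≤ (n:ℤ)*((n:ℤ)+1)^2*((n:ℤ)-4) := by
    have := sq_nonneg ((n:ℤ)+1)
    nlinarith
  push_cast at h12 ⊢
  nlinarith [h12, hpos]

private lemma assemble (n : ℕ) (hn : 4 ≤ n) (lam : ℝ) (h0 : 0 ≤ lam) (h1 : lam ≤ 1) :
    0 ≤ ∑ k ∈ Finset.range (2*n+1), (coefC n k : ℝ) * lam ^ k := by
  have htotR : (0:ℝ) ≤ ∑ k ∈ Finset.range (2*n+1), (coefC n k : ℝ) := by
    have h := key_s9 n 1
    simp only [one_pow, mul_one] at h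
    rw [← h]
    exact_mod_cast totalZ n hn
  by_cases hne : (Finset.filter (fun k => coefC n k < 0) (Finset.range (2*n+1))).Nonempty
  · have hk0mem := Finset.min'_mem _ hne
    have hmin : ∀ k ∈ Finset.filter (fun k => coefC n k < 0) (Finset.range (2*n+1)),
        (Finset.filter (fun k => coefC n k < 0) (Finset.range (2*n+1))).min' hne ≤ k :=
      fun k hk => Finset.min'_le _ k hk
    set k0 := (Finset.filter (fun k => coefC n k < 0) (Finset.range (2*n+1))).min' hne
      with hk0
    rw [Finset.mem_filter, Finset.mem_range] at hk0mem
    have bound : ∀ k ∈ Finset.range (2*n+1),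
        (coefC n k : ℝ) * lam ^ k0 ≤ (coefC n k : ℝ) * lam ^ k := by
      intro k hk
      rw [Finset.mem_range] at hk
      rcases lt_or_ge (coefC n k) 0 with hc | hc
      · have hk0le : k0 ≤ k := hmin k
          (by rw [Finset.mem_filter, Finset.mem_range]; exact ⟨hk, hc⟩)
        have hpow : lam ^ k ≤ lam ^ k0 := pow_le_pow_of_le_one h0 h1 hk0le
        have hcr : (coefC n k : ℝ) ≤ 0 := by exact_mod_cast hc.le
        exact mul_le_mul_of_nonpos_left hpow hcr
      · rcases le_or_gt k0 k with hlk | hlk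
        · have hz : coefC n k ≤ 0 := coefC_mono n k0 k hlk (by omega) hk0mem.2
          have hzz : coefC n k = 0 := le_antisymm hz hc
          simp [hzz]
        · have hpow : lam ^ k0 ≤ lam ^ k := pow_le_pow_of_le_one h0 h1 hlk.le
          have hcr : (0:ℝ) ≤ (coefC n k : ℝ) := by exact_mod_cast hc
          exact mul_le_mul_of_nonneg_left hpow hcr
    calc (0:ℝ) ≤ (∑ k ∈ Finset.range (2*n+1), (coefC n k : ℝ)) * lam ^ k0 :=
          mul_nonneg htotR (pow_nonneg h0 _)
      _ = ∑ k ∈ Finset.range (2*n+1), (coefC n k : ℝ) * lam ^ k0 := Finset.sum_mul _ _ _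
      _ ≤ ∑ k ∈ Finset.range (2*n+1), (coefC n k : ℝ) * lam ^ k :=
          Finset.sum_le_sum bound
  · refine Finset.sum_nonneg fun k hk => mul_nonneg ?_ (pow_nonneg h0 _)
    rw [Finset.not_nonempty_iff_eq_empty, Finset.filter_eq_empty_iff] at hne
    have := hne hk
    push_neg at this
    exact_mod_cast this

/-- The double-sum nonnegativity at the heart of Lemma 3: for `γ ≥ 3` and
`λ ∈ [0,1]`, `∑_{i=0}^{γ+1} ∑_{j=0}^{γ+1} (j² − j(i+1)) λ^{i+j} ≥ 0`. -/
theorem double_sum_nonneg (γ : ℕ) (hγ : 3 ≤ γ) (lam : ℝ)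
    (h0 : 0 ≤ lam) (h1 : lam ≤ 1) :
    0 ≤ ∑ i ∈ Finset.range (γ + 2), ∑ j ∈ Finset.range (γ + 2),
        (((j : ℤ) ^ 2 - (j : ℤ) * ((i : ℤ) + 1) : ℤ) : ℝ) * lam ^ (i + j) := by
  show 0 ≤ ∑ i ∈ Finset.range ((γ+1) + 1), ∑ j ∈ Finset.range ((γ+1) + 1),
        (((j : ℤ) ^ 2 - (j : ℤ) * ((i : ℤ) + 1) : ℤ) : ℝ) * lam ^ (i + j)
  rw [key_s9 (γ+1) lam]
  exact assemble (γ+1) (by omega) lam h0 h1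
end

section
/- Fix a real κ with 1 < κ < 2. For a > 1, define λ_a := √((κ−1)a + 1) − 1, λ̃_a := λ_a/(1+λ_a), Z*_a := (λ_a·(κa − λ_a)/a − λ_a)/(1 + λ_a), and Z̃_a := (λ̃_a·(κa − λ̃_a)/a − λ̃_a)/(1 + λ̃_a). Then, as a → ∞, Z*_a → κ − 1, Z̃_a → (κ−1)/2, and consequently Z̃_a / Z*_a → 1/2. -/
open Filter

/-- Optimal arrival rate `λ_a = √((κ−1)a+1) − 1` of the tightness instance. -/
noncomputable def lamStar (κ a : ℝ) : ℝ := Real.sqrt ((κ - 1) * a + 1) - 1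

/-- Average arrival rate `λ̃_a = λ_a/(1+λ_a)` of the optimal policy. -/
noncomputable def lamTilde (κ a : ℝ) : ℝ := lamStar κ a / (1 + lamStar κ a)

/-- Objective value `Z*_a` of the optimal dynamic policy. -/
noncomputable def Zstar (κ a : ℝ) : ℝ :=
  (lamStar κ a * (κ * a - lamStar κ a) / a - lamStar κ a) / (1 + lamStar κ a)

/-- Objective value `Z̃_a` of the static policy `π^{λ̃,0}`. -/
noncomputable def Ztilde (κ a : ℝ) : ℝ :=
  (lamTilde κ a * (κ * a - lamTilde κ a) / a - lamTilde κ a) / (1 + lamTilde κ a)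

/-!
Since `λ_a = √((κ-1)a+1) - 1` solves `λ(λ+2) = (κ-1)a`, it tends to infinity while
`λ_a / a = (κ-1)/(λ_a+2)` tends to `0`. Writing the objective at rate `x` as
`x((κ-1) - x/a)/(1+x)`, the same identity gives `Z*_a = (κ-1) - 2λ_a/a → κ-1`, whereas
`λ̃_a → 1` forces `Z̃_a → (κ-1)/2`: the factor `x/(1+x)` is `1/2` at `x = 1`.
-/

open Topology

theorem tendsto_div_one_add_atTop_nhds_one :
    Tendsto (fun x : ℝ => x / (1 + x)) atTop (𝓝 1) := by
  have h : Tendsto (fun x : ℝ => 1 - (1 + x)⁻¹) atTop (𝓝 (1 - 0)) :=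
    tendsto_const_nhds.sub (tendsto_atTop_add_const_left _ 1 tendsto_id).inv_tendsto_atTop
  rw [sub_zero] at h
  refine h.congr' ?_
  filter_upwards [eventually_gt_atTop 0] with x hx
  field_simp
  ring

theorem objective_eq_mul_sub_div (κ a x : ℝ) (ha : a ≠ 0) :
    (x * (κ * a - x) / a - x) / (1 + x) = x * ((κ - 1) - x / a) / (1 + x) := by
  congr 1
  field_simp
  ring

section

variable {κ : ℝ}

theorem lamStar_mul_lamStar_add_two {a : ℝ} (h : 0 ≤ (κ - 1) * a + 1) :
    lamStar κ a * (lamStar κ a + 2) = (κ - 1) * a := by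
  have := Real.sq_sqrt h
  unfold lamStar
  linear_combination this

theorem lamStar_nonneg {a : ℝ} (h : 0 ≤ (κ - 1) * a) : 0 ≤ lamStar κ a :=
  sub_nonneg.2 (Real.one_le_sqrt.2 (by linarith))

theorem lamStar_div_eq {a : ℝ} (ha : 0 < a) (hκ : 1 ≤ κ) :
    lamStar κ a / a = (κ - 1) / (lamStar κ a + 2) := by
  have h : 0 ≤ (κ - 1) * a := mul_nonneg (sub_nonneg.2 hκ) ha.le
  have := lamStar_nonneg h
  rw [div_eq_div_iff ha.ne' (by positivity)]
  linear_combination lamStar_mul_lamStar_add_two (by linarith : 0 ≤ (κ - 1) * a + 1)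

theorem tendsto_lamStar_atTop (hκ : 1 < κ) : Tendsto (lamStar κ) atTop atTop :=
  tendsto_atTop_add_const_right _ (-1) <| Real.tendsto_sqrt_atTop.comp <|
    tendsto_atTop_add_const_right _ 1 (tendsto_id.const_mul_atTop (sub_pos.2 hκ))

theorem tendsto_lamStar_div_self (hκ : 1 < κ) :
    Tendsto (fun a => lamStar κ a / a) atTop (𝓝 0) := by
  have h : Tendsto (fun a => (κ - 1) / (lamStar κ a + 2)) atTop (𝓝 0) :=
    tendsto_const_nhds.div_atTop (tendsto_atTop_add_const_right _ 2 (tendsto_lamStar_atTop hκ))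
  refine h.congr' ?_
  filter_upwards [eventually_gt_atTop 0] with a ha
  exact (lamStar_div_eq ha hκ.le).symm

theorem tendsto_lamTilde (hκ : 1 < κ) : Tendsto (lamTilde κ) atTop (𝓝 1) :=
  tendsto_div_one_add_atTop_nhds_one.comp (tendsto_lamStar_atTop hκ)

theorem Zstar_eq_sub {a : ℝ} (ha : 0 < a) (hκ : 1 ≤ κ) :
    Zstar κ a = (κ - 1) - 2 * (lamStar κ a / a) := by
  have := lamStar_nonneg (mul_nonneg (sub_nonneg.2 hκ) ha.le)
  rw [Zstar, objective_eq_mul_sub_div κ a _ ha.ne', div_eq_iff (by positivity),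
    lamStar_div_eq ha hκ]
  field_simp
  ring

theorem tendsto_Zstar (hκ : 1 < κ) : Tendsto (Zstar κ) atTop (𝓝 (κ - 1)) := by
  have h := (tendsto_const_nhds (x := κ - 1)).sub
    ((tendsto_lamStar_div_self hκ).const_mul 2)
  rw [mul_zero, sub_zero] at h
  refine h.congr' ?_
  filter_upwards [eventually_gt_atTop 0] with a ha
  exact (Zstar_eq_sub ha hκ.le).symm

theorem tendsto_Ztilde (hκ : 1 < κ) : Tendsto (Ztilde κ) atTop (𝓝 ((κ - 1) / 2)) := by
  have ht := tendsto_lamTilde hκ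
  have hnum := ht.mul (tendsto_const_nhds (x := κ - 1) |>.sub (ht.mul tendsto_inv_atTop_zero))
  have h := hnum.div (tendsto_const_nhds.add ht) (by norm_num : (1 : ℝ) + 1 ≠ 0)
  rw [mul_zero, sub_zero, one_mul, one_add_one_eq_two] at h
  refine h.congr' ?_
  filter_upwards [eventually_gt_atTop 0] with a ha
  rw [Ztilde, objective_eq_mul_sub_div κ a _ ha.ne', div_eq_mul_inv _ a]
  rfl

end

theorem tightness_limits_general (κ : ℝ) (h1 : 1 < κ) :
    Tendsto (fun a => Zstar κ a) atTop (nhds (κ - 1)) ∧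
      Tendsto (fun a => Ztilde κ a) atTop (nhds ((κ - 1) / 2)) ∧
      Tendsto (fun a => Ztilde κ a / Zstar κ a) atTop (nhds (1 / 2)) := by
  have hZstar := tendsto_Zstar h1
  have hZtilde := tendsto_Ztilde h1
  refine ⟨hZstar, hZtilde, ?_⟩
  have hne : κ - 1 ≠ 0 := (sub_pos.2 h1).ne'
  rw [show (1 : ℝ) / 2 = (κ - 1) / 2 / (κ - 1) by field_simp]
  exact hZtilde.div hZstar hne

/-- Tightness of the 1/2 guarantee (Section 3.4): as `a → ∞`,
`Z*_a → κ − 1`, `Z̃_a → (κ−1)/2`, and `Z̃_a/Z*_a → 1/2`. -/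
theorem tightness_limits (κ : ℝ) (h1 : 1 < κ) (h2 : κ < 2) :
    Tendsto (fun a => Zstar κ a) atTop (nhds (κ - 1)) ∧
      Tendsto (fun a => Ztilde κ a) atTop (nhds ((κ - 1) / 2)) ∧
      Tendsto (fun a => Ztilde κ a / Zstar κ a) atTop (nhds (1 / 2)) :=
  tightness_limits_general κ h1
end

section
/- Let Λ > 0 and γ > 0 be real numbers and let R : ℝ → ℝ be a function bounded above on [0, Λ]. Let h : ℕ → ℝ be nonincreasing and satisfy h(i+1) + h(i−1) ≤ 2h(i) for all integers i ≥ 1 (discrete concavity). Define A(i) := sup_{λ ∈ [0,Λ]} ( R(λ) + γ·λ·h(i+1) + γ·(Λ−λ)·h(i) ) for i ≥ 0. Then A is nonincreasing, and A(i+1) + A(i−1) ≤ 2·A(i) for all integers i ≥ 1. -/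
/-- The 'arrival part' of the uniformized Bellman operator:
`A(i) = sup_{λ ∈ [0,Λ]} ( R(λ) + γ λ h(i+1) + γ (Λ−λ) h(i) )`. -/
noncomputable def bellmanA (Λ γ : ℝ) (R : ℝ → ℝ) (h : ℕ → ℝ) (i : ℕ) : ℝ :=
  sSup ((fun lam => R lam + γ * lam * h (i + 1) + γ * (Λ - lam) * h i) ''
    Set.Icc (0 : ℝ) Λ)

lemma bellmanA_bdd (Λ γ : ℝ) (hΛ : 0 < Λ) (hγ : 0 < γ)
    (R : ℝ → ℝ) (hR : BddAbove (R '' Set.Icc (0 : ℝ) Λ)) (h : ℕ → ℝ) (i : ℕ) :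
    BddAbove ((fun lam => R lam + γ * lam * h (i + 1) + γ * (Λ - lam) * h i) ''
      Set.Icc (0 : ℝ) Λ) := by
  obtain ⟨M, hM⟩ := hR
  refine ⟨M + γ * Λ * |h (i+1)| + γ * Λ * |h i|, ?_⟩
  rintro y ⟨lam, ⟨h0, h1⟩, rfl⟩
  have hRl : R lam ≤ M := hM ⟨lam, ⟨h0, h1⟩, rfl⟩
  have a1 := le_abs_self (h (i+1))
  have a2 := le_abs_self (h i)
  have b1 := abs_nonneg (h (i+1))
  have b2 := abs_nonneg (h i)
  have c1 : γ * lam * h (i+1) ≤ γ * Λ * |h (i+1)| := by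
    have t : lam * h (i+1) ≤ Λ * |h (i+1)| :=
      le_trans (mul_le_mul_of_nonneg_left a1 h0) (mul_le_mul_of_nonneg_right h1 b1)
    calc γ * lam * h (i+1) = γ * (lam * h (i+1)) := by ring
      _ ≤ γ * (Λ * |h (i+1)|) := mul_le_mul_of_nonneg_left t hγ.le
      _ = γ * Λ * |h (i+1)| := by ring
  have c2 : γ * (Λ - lam) * h i ≤ γ * Λ * |h i| := by
    have t : (Λ - lam) * h i ≤ Λ * |h i| :=
      le_trans (mul_le_mul_of_nonneg_left a2 (by linarith)) (mul_le_mul_of_nonneg_right (by linarith) b2)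
    calc γ * (Λ - lam) * h i = γ * ((Λ - lam) * h i) := by ring
      _ ≤ γ * (Λ * |h i|) := mul_le_mul_of_nonneg_left t hγ.le
      _ = γ * Λ * |h i| := by ring
  dsimp only
  linarith

lemma bellmanA_ne (Λ : ℝ) (hΛ : 0 < Λ) (γ : ℝ) (R : ℝ → ℝ) (h : ℕ → ℝ) (i : ℕ) :
    ((fun lam => R lam + γ * lam * h (i + 1) + γ * (Λ - lam) * h i) ''
      Set.Icc (0 : ℝ) Λ).Nonempty :=
  (Set.nonempty_Icc.mpr hΛ.le).image _

/-- Key structural step of Proposition 1: if `h` is nonincreasing and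
discretely concave and `R` is bounded above on `[0,Λ]`, then `A` is
nonincreasing and discretely concave. -/
theorem bellman_preserves_structure (Λ γ : ℝ) (hΛ : 0 < Λ) (hγ : 0 < γ)
    (R : ℝ → ℝ) (hR : BddAbove (R '' Set.Icc (0 : ℝ) Λ))
    (h : ℕ → ℝ) (hmono : Antitone h)
    (hconc : ∀ i : ℕ, 1 ≤ i → h (i + 1) + h (i - 1) ≤ 2 * h i) :
    Antitone (bellmanA Λ γ R h) ∧
      ∀ i : ℕ, 1 ≤ i →
        bellmanA Λ γ R h (i + 1) + bellmanA Λ γ R h (i - 1) ≤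
          2 * bellmanA Λ γ R h i := by
  have bdd := bellmanA_bdd Λ γ hΛ hγ R hR h
  have ne := bellmanA_ne Λ hΛ γ R h
  constructor
  · apply antitone_nat_of_succ_le
    intro i
    apply csSup_le (ne (i+1))
    rintro y ⟨lam, hlam, rfl⟩
    have h1 : h (i+1+1) ≤ h (i+1) := hmono (by omega)
    have h2 : h (i+1) ≤ h i := hmono (by omega)
    calc R lam + γ * lam * h (i+1+1) + γ * (Λ - lam) * h (i+1)
        ≤ R lam + γ * lam * h (i+1) + γ * (Λ - lam) * h i := by
          have p1 : 0 ≤ γ * lam * (h (i+1) - h (i+1+1)) :=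
            mul_nonneg (mul_nonneg hγ.le hlam.1) (by linarith)
          have p2 : 0 ≤ γ * (Λ - lam) * (h i - h (i+1)) :=
            mul_nonneg (mul_nonneg hγ.le (by linarith [hlam.2])) (by linarith)
          nlinarith [p1, p2]
      _ ≤ bellmanA Λ γ R h i := le_csSup (bdd i) ⟨lam, hlam, rfl⟩
  · intro i hi
    obtain ⟨j, rfl⟩ : ∃ j, i = j + 1 := ⟨i - 1, by omega⟩
    simp only [Nat.add_sub_cancel]
    have key : ∀ lam ∈ Set.Icc (0:ℝ) Λ, ∀ lam' ∈ Set.Icc (0:ℝ) Λ,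
        (R lam + γ * lam * h (j+1+1+1) + γ * (Λ - lam) * h (j+1+1)) +
        (R lam' + γ * lam' * h (j+1) + γ * (Λ - lam') * h j) ≤
        2 * bellmanA Λ γ R h (j+1) := by
      intro lam hlam lam' hlam'
      have c1 := hconc (j+1+1) (by omega)
      have c2 := hconc (j+1) (by omega)
      simp only [Nat.add_sub_cancel] at c1 c2
      have step : (R lam + γ * lam * h (j+1+1+1) + γ * (Λ - lam) * h (j+1+1)) +
          (R lam' + γ * lam' * h (j+1) + γ * (Λ - lam') * h j) ≤
          (R lam + γ * lam * h (j+1+1) + γ * (Λ - lam) * h (j+1)) +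
          (R lam' + γ * lam' * h (j+1+1) + γ * (Λ - lam') * h (j+1)) := by
        have q1 : 0 ≤ γ * lam * (2 * h (j+1+1) - h (j+1+1+1) - h (j+1)) :=
          mul_nonneg (mul_nonneg hγ.le hlam.1) (by linarith)
        have q2 : 0 ≤ γ * (Λ - lam') * (2 * h (j+1) - h (j+1+1) - h j) :=
          mul_nonneg (mul_nonneg hγ.le (by linarith [hlam'.2])) (by linarith)
        nlinarith [q1, q2]
      have s1 : R lam + γ * lam * h (j+1+1) + γ * (Λ - lam) * h (j+1) ≤
          bellmanA Λ γ R h (j+1) := le_csSup (bdd (j+1)) ⟨lam, hlam, rfl⟩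
      have s2 : R lam' + γ * lam' * h (j+1+1) + γ * (Λ - lam') * h (j+1) ≤
          bellmanA Λ γ R h (j+1) := le_csSup (bdd (j+1)) ⟨lam', hlam', rfl⟩
      linarith
    have step1 : bellmanA Λ γ R h (j+1+1) ≤
        2 * bellmanA Λ γ R h (j+1) - bellmanA Λ γ R h j := by
      apply csSup_le (ne (j+1+1))
      rintro y ⟨lam, hlam, rfl⟩
      have step2 : bellmanA Λ γ R h j ≤
          2 * bellmanA Λ γ R h (j+1) -
          (R lam + γ * lam * h (j+1+1+1) + γ * (Λ - lam) * h (j+1+1)) := by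
        apply csSup_le (ne j)
        rintro y' ⟨lam', hlam', rfl⟩
        have := key lam hlam lam' hlam'
        dsimp only at *
        linarith
      dsimp only
      linarith
    linarith
end

section
/- For every integer C ≥ 1, one has ((C+1)^{C+1}/(C+1)!) / (∑_{n=0}^{C+1} (C+1)^n/n!) < (C^C/C!) / (∑_{n=0}^{C} C^n/n!); that is, the sequence C ↦ (C^C/C!)/(∑_{n=0}^{C} C^n/n!) is strictly decreasing in C. -/
open Finset

noncomputable def erlT (C : ℕ) : ℝ :=
  ∑ k ∈ Finset.range (C + 1), ∏ j ∈ Finset.range k, ((C : ℝ) - j) / C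

lemma erl_term_nonneg (C k : ℕ) (hk : k ≤ C) :
    0 ≤ ∏ j ∈ Finset.range k, ((C : ℝ) - j) / C := by
  apply Finset.prod_nonneg
  intro j hj
  simp only [mem_range] at hj
  have hjC : (j : ℝ) < C := by exact_mod_cast lt_of_lt_of_le hj hk
  have hC : (0:ℝ) < C := lt_of_le_of_lt (Nat.cast_nonneg j) hjC
  exact div_nonneg (by linarith) hC.le

lemma erlT_pos (C : ℕ) : 0 < erlT C := by
  unfold erlT
  have h1 : (1:ℝ) ≤ ∑ k ∈ Finset.range (C + 1), ∏ j ∈ Finset.range k, ((C : ℝ) - j) / C := by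
    have := Finset.single_le_sum (f := fun k => ∏ j ∈ Finset.range k, ((C : ℝ) - j) / C)
      (fun k hk => erl_term_nonneg C k (by simp only [mem_range] at hk; omega))
      (show 0 ∈ Finset.range (C+1) by simp)
    simpa using this
  linarith

lemma erl_sum_eq (C : ℕ) (hC : 1 ≤ C) :
    ∑ n ∈ Finset.range (C + 1), (C : ℝ) ^ n / (Nat.factorial n : ℝ) =
      ((C : ℝ) ^ C / (Nat.factorial C : ℝ)) * erlT C := by
  unfold erlT
  rw [Finset.mul_sum]
  rw [← Finset.sum_range_reflect (fun n => (C : ℝ) ^ n / (Nat.factorial n : ℝ)) (C+1)]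
  apply Finset.sum_congr rfl
  intro k hk
  simp only [mem_range] at hk
  have hkC : k ≤ C := by omega
  simp only [Nat.add_sub_cancel]
  -- product equals descFactorial / C^k
  have hprod : ∏ j ∈ Finset.range k, ((C : ℝ) - j) / C
      = (C.descFactorial k : ℝ) / (C : ℝ) ^ k := by
    rw [Nat.descFactorial_eq_prod_range]
    push_cast
    rw [Finset.prod_div_distrib, Finset.prod_const, Finset.card_range]
    congr 1
    apply Finset.prod_congr rfl
    intro j hj
    simp only [mem_range] at hj
    have : j ≤ C := le_trans (le_of_lt hj) hkC
    rw [Nat.cast_sub this]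
  rw [hprod]
  have hD : ((C - k).factorial : ℝ) * (C.descFactorial k : ℝ) = (C.factorial : ℝ) := by
    exact_mod_cast congrArg (Nat.cast (R := ℝ)) (Nat.factorial_mul_descFactorial hkC)
  have hpow : (C:ℝ) ^ C = (C:ℝ) ^ (C - k) * (C:ℝ) ^ k := by
    rw [← pow_add]; congr 1; omega
  have hC0 : (C:ℝ) ≠ 0 := by positivity
  have hf1 : ((C - k).factorial : ℝ) ≠ 0 := by exact_mod_cast (Nat.factorial_pos _).ne'
  have hf2 : ((C).factorial : ℝ) ≠ 0 := by exact_mod_cast (Nat.factorial_pos _).ne'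
  field_simp
  rw [hpow, ← hD]
  ring

lemma erlT_lt (C : ℕ) (hC : 1 ≤ C) : erlT C < erlT (C + 1) := by
  unfold erlT
  conv_rhs => rw [Finset.sum_range_succ]
  have hlast : 0 < ∏ j ∈ Finset.range (C + 1), (((C:ℕ)+1 : ℝ) - j) / ((C:ℕ)+1 : ℝ) := by
    apply Finset.prod_pos
    intro j hj
    simp only [mem_range] at hj
    have : (j:ℝ) < (C:ℝ) + 1 := by exact_mod_cast hj
    have h0 : (0:ℝ) < (C:ℝ) + 1 := by positivity
    apply div_pos (by linarith) h0
  have hle : ∑ k ∈ Finset.range (C + 1), ∏ j ∈ Finset.range k, ((C : ℝ) - j) / C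
      ≤ ∑ k ∈ Finset.range (C + 1), ∏ j ∈ Finset.range k, (((C+1:ℕ) : ℝ) - j) / ((C+1:ℕ):ℝ) := by
    apply Finset.sum_le_sum
    intro k hk
    simp only [mem_range] at hk
    apply Finset.prod_le_prod
    · intro j hj
      simp only [mem_range] at hj
      have hjC : (j : ℝ) < C := by exact_mod_cast lt_of_lt_of_le hj (by omega : k ≤ C)
      have hCpos : (0:ℝ) < C := lt_of_le_of_lt (Nat.cast_nonneg j) hjC
      exact div_nonneg (by linarith) hCpos.le
    · intro j hj
      simp only [mem_range] at hj
      have hjC : (j : ℝ) < C := by exact_mod_cast lt_of_lt_of_le hj (by omega : k ≤ C)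
      have hCpos : (0:ℝ) < C := lt_of_le_of_lt (Nat.cast_nonneg j) hjC
      rw [div_le_div_iff₀ hCpos (by push_cast; linarith)]
      push_cast
      nlinarith [Nat.cast_nonneg (α := ℝ) j]
  push_cast at hle hlast ⊢
  linarith

/-- The Erlang-loss blocking probability `(C^C/C!)/(∑_{n=0}^{C} C^n/n!)` is
strictly decreasing in the number of servers `C ≥ 1`, so the profit
guarantees of Theorem 3 are strictly improving in `C`. -/
theorem erlang_blocking_strict_anti (C : ℕ) (hC : 1 ≤ C) :
    (((C : ℝ) + 1) ^ (C + 1) / (Nat.factorial (C + 1) : ℝ)) /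
        ∑ n ∈ Finset.range (C + 2), ((C : ℝ) + 1) ^ n / (Nat.factorial n : ℝ) <
      ((C : ℝ) ^ C / (Nat.factorial C : ℝ)) /
        ∑ n ∈ Finset.range (C + 1), (C : ℝ) ^ n / (Nat.factorial n : ℝ) := by
  have h1 := erl_sum_eq C hC
  have h2 := erl_sum_eq (C+1) (by omega)
  have hA1 : (0:ℝ) < (C : ℝ) ^ C / (Nat.factorial C : ℝ) := by
    have : (0:ℝ) < (C:ℝ) := by exact_mod_cast hC
    have := Nat.factorial_pos C
    positivity
  have hA2 : (0:ℝ) < ((C:ℕ)+1 : ℝ) ^ (C+1) / (Nat.factorial (C+1) : ℝ) := by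
    have := Nat.factorial_pos (C+1)
    positivity
  have hT1 := erlT_pos C
  have hT2 := erlT_pos (C+1)
  have hgen : ∀ a t : ℝ, a ≠ 0 → a / (a * t) = 1 / t := by
    intro a t ha
    rcases eq_or_ne t 0 with rfl | ht
    · simp
    · field_simp
  have e1 : ((C : ℝ) ^ C / (Nat.factorial C : ℝ)) /
      ∑ n ∈ Finset.range (C + 1), (C : ℝ) ^ n / (Nat.factorial n : ℝ) = 1 / erlT C := by
    rw [h1]; exact hgen _ _ hA1.ne'
  have h2' : ∑ n ∈ Finset.range (C + 2), ((C : ℝ) + 1) ^ n / (Nat.factorial n : ℝ)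
      = (((C : ℝ) + 1) ^ (C+1) / (Nat.factorial (C+1) : ℝ)) * erlT (C+1) := by
    push_cast at h2 ⊢
    convert h2 using 2
  have e2 : (((C : ℝ) + 1) ^ (C + 1) / (Nat.factorial (C + 1) : ℝ)) /
      ∑ n ∈ Finset.range (C + 2), ((C : ℝ) + 1) ^ n / (Nat.factorial n : ℝ) = 1 / erlT (C+1) := by
    rw [h2']; exact hgen _ _ hA2.ne'
  rw [e1, e2]
  exact one_div_lt_one_div_of_lt hT1 (erlT_lt C hC)
end
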